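/- arXiv:2006.00041 — 6 statements merged into one kernel-verified Lean document; each statement's English description precedes it below -/
import Mathlib

section
/- Let B be the (oriented) incidence matrix of a finite connected multigraph Γ without self-loops, with rows indexed by edges E and columns indexed by vertices V. Fix subsets E₀ ⊆ E and V₀ ⊆ V whose complements have equal size r, and let B' denote the r×r matrix obtained by deleting the rows in E₀ and the columns in V₀. Then the following are equivalent: (a) det(B') = ±1; (b) det(B') ≠ 0; (c) the edges of E \ E₀ form a spanning |V₀|-forest of Γ (a collection of |V₀| pairwise disjoint trees covering all vertices) in which each tree contains exactly one vertex of V₀. -/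
open Matrix

noncomputable section

/-- A finite multigraph without self-loops: each edge `e` has a head and a tail. -/
structure Multigraph where
  V : Type
  E : Type
  fintypeV : Fintype V
  decEqV : DecidableEq V
  fintypeE : Fintype E
  decEqE : DecidableEq E
  head : E → V
  tail : E → V
  loopless : ∀ e, head e ≠ tail e

namespace Multigraph

variable (G : Multigraph)

instance : Fintype G.V := G.fintypeV
instance : DecidableEq G.V := G.decEqV
instance : Fintype G.E := G.fintypeE
instance : DecidableEq G.E := G.decEqE

/-- `v` and `w` are joined by some edge belonging to `F`. -/
def edgeRel (F : Finset G.E) (v w : G.V) : Prop :=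
  ∃ e ∈ F, (G.head e = v ∧ G.tail e = w) ∨ (G.head e = w ∧ G.tail e = v)

/-- Reachability using only edges in `F`. -/
def Reach (F : Finset G.E) : G.V → G.V → Prop :=
  Relation.EqvGen (G.edgeRel F)

/-- The multigraph is connected. -/
def Connected : Prop := ∀ v w : G.V, G.Reach Finset.univ v w

/-- The number of edges joining `v` and `w`. -/
def edgeCount (v w : G.V) : ℕ :=
  Nat.card {e : G.E // (G.head e = v ∧ G.tail e = w) ∨ (G.head e = w ∧ G.tail e = v)}

/-- The degree of a vertex. -/
def degree (v : G.V) : ℕ :=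
  Nat.card {e : G.E // G.head e = v ∨ G.tail e = v}

/-- The Laplacian matrix of the multigraph. -/
def laplacian : Matrix G.V G.V ℤ :=
  Matrix.of fun v w => if v = w then (G.degree v : ℤ) else -(G.edgeCount v w : ℤ)

/-- The reduced Laplacian: delete the row and column of the sink `s`. -/
def reducedLaplacian (s : G.V) : Matrix {v : G.V // v ≠ s} {v : G.V // v ≠ s} ℤ :=
  Matrix.of fun v w => G.laplacian v.1 w.1

/-- A spanning tree, seen as a set of edges: it connects all vertices and has
`|V| - 1` edges. -/
def IsSpanningTree (T : Finset G.E) : Prop :=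
  (∀ v w : G.V, G.Reach T v w) ∧ T.card + 1 = Fintype.card G.V

/-- The number of connected components of the spanning subgraph with edge set `F`. -/
def numComponents (F : Finset G.E) : ℕ :=
  Nat.card (Quotient (Relation.EqvGen.setoid (G.edgeRel F)))

/-- `F` is the edge set of a spanning forest: the number of connected components of
`(V, F)` equals `|V| - |F|` (i.e. `F` is acyclic). -/
def IsForest (F : Finset G.E) : Prop :=
  G.numComponents F + F.card = Fintype.card G.V

end Multigraph

/-!
Write `F = E \ E₀` and `B'` for the reduced incidence matrix, whose columns are the vertices
outside `V₀`. If some component of `(V, F)` misses `V₀`, its indicator vector lies in the kernel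
of `B'`; so `det B' ≠ 0` forces every component to meet `V₀`. Rank–nullity for the coboundary map
`y ↦ (y (head e) - y (tail e))_{e ∈ F}`, whose kernel consists of the functions constant on
components, gives `|V| ≤ #components + |F| = #components + |V| - |V₀|`; hence each component
contains exactly one vertex of `V₀`, and `F` is a forest.

Conversely, if every vertex reaches `V₀` through `F`, give each `v ∉ V₀` the first edge of a
shortest walk from `v` to `V₀`. Both ends of an edge cannot choose it, so this is a bijection
onto `F`, and ordering the vertices by their distance to `V₀` makes `B'`, reindexed along it,
triangular with diagonal entries `±1`.
-/

namespace Matrix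

theorem det_eq_prod_diag_of_ranking {n R : Type*} [Fintype n] [DecidableEq n] [CommRing R]
    (M : Matrix n n R) (h : n → ℕ) (hM : ∀ i j, M i j ≠ 0 → j = i ∨ h j < h i) :
    M.det = ∏ i, M i i := by
  -- a linear order refining `h` for which `M` is lower triangular
  let : LinearOrder n := LinearOrder.lift' (fun i => toLex (h i, Fintype.equivFin n i))
    fun i j hij => (Fintype.equivFin n).injective (Prod.ext_iff.mp (toLex.injective hij)).2
  refine det_of_isLowerTriangular M fun i j hij => ?_
  by_contra hne
  rcases hM i j hne with rfl | hlt
  · exact lt_irrefl _ hij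
  · have : h i ≤ h j := Prod.Lex.lt_iff.mp hij |>.elim le_of_lt (·.1.le)
    omega

theorem abs_det_eq_one_of_ranking {n : Type*} [Fintype n] [DecidableEq n] (M : Matrix n n ℤ)
    (h : n → ℕ) (hM : ∀ i j, M i j ≠ 0 → j = i ∨ h j < h i) (hdiag : ∀ i, |M i i| = 1) :
    |M.det| = 1 := by
  rw [det_eq_prod_diag_of_ranking M h hM, Finset.abs_prod]
  exact Finset.prod_eq_one fun i _ => hdiag i

end Matrix

namespace Multigraph

variable (G : Multigraph)

def incidence : Matrix G.E G.V ℤ :=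
  of fun e v => if G.head e = v then 1 else if G.tail e = v then -1 else 0

theorem incidence_row (e : G.E) :
    G.incidence e = Pi.single (G.head e) 1 - Pi.single (G.tail e) 1 := by
  ext v
  have := G.loopless e
  by_cases h₁ : G.head e = v <;> by_cases h₂ : G.tail e = v <;> subst_vars <;>
    simp_all [incidence, eq_comm]

theorem incidence_mulVec (y : G.V → ℤ) (e : G.E) :
    (G.incidence *ᵥ y) e = y (G.head e) - y (G.tail e) := by
  rw [mulVec, incidence_row, sub_dotProduct]
  simp

theorem incidence_ne_zero_iff {e : G.E} {v : G.V} :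
    G.incidence e v ≠ 0 ↔ v = G.head e ∨ v = G.tail e := by
  have := G.loopless e
  rw [incidence_row]
  by_cases h₁ : v = G.head e <;> by_cases h₂ : v = G.tail e <;> simp_all

theorem abs_incidence_of_ne_zero {e : G.E} {v : G.V} (h : G.incidence e v ≠ 0) :
    |G.incidence e v| = 1 := by
  have := G.loopless e
  rcases (G.incidence_ne_zero_iff).mp h with rfl | rfl <;> simp_all [incidence_row]

variable {G}

theorem edgeRel_comm {F : Finset G.E} {v w : G.V} : G.edgeRel F v w ↔ G.edgeRel F w v := by
  simp only [edgeRel, or_comm]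

theorem reach_head_tail {F : Finset G.E} {e : G.E} (he : e ∈ F) :
    G.Reach F (G.head e) (G.tail e) :=
  .rel _ _ ⟨e, he, .inl ⟨rfl, rfl⟩⟩

theorem Reach.eq_of_forall_head_eq_tail {F : Finset G.E} {β : Type*} {y : G.V → β}
    (hy : ∀ e ∈ F, y (G.head e) = y (G.tail e)) {v w : G.V} (h : G.Reach F v w) : y v = y w :=
  congrArg (Quot.lift y fun
    | _, _, ⟨e, he, .inl ⟨h₁, h₂⟩⟩ => h₁ ▸ h₂ ▸ hy e he
    | _, _, ⟨e, he, .inr ⟨h₁, h₂⟩⟩ => h₁ ▸ h₂ ▸ (hy e he).symm) (Quot.eqvGen_sound h)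

theorem card_le_numComponents_add_card (F : Finset G.E) :
    Fintype.card G.V ≤ G.numComponents F + F.card := by
  let s := Relation.EqvGen.setoid (G.edgeRel F)
  have := Fintype.ofFinite (Quotient s)
  let L : (G.V → ℚ) →ₗ[ℚ] F → ℚ :=
    LinearMap.pi fun e =>
      LinearMap.proj (R := ℚ) (φ := fun _ => ℚ) (G.head e) - LinearMap.proj (G.tail e)
  have hker : LinearMap.ker L ≤ LinearMap.range (LinearMap.funLeft ℚ ℚ (Quotient.mk s)) := by
    intro y hy
    have hy' : ∀ e ∈ F, y (G.head e) = y (G.tail e) := fun e he =>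
      sub_eq_zero.mp (congrFun (LinearMap.mem_ker.mp hy) ⟨e, he⟩)
    exact ⟨Quotient.lift y fun _ _ => Reach.eq_of_forall_head_eq_tail hy', rfl⟩
  have hrange := (LinearMap.range L).finrank_le
  have hkerDim := (Submodule.finrank_mono hker).trans (LinearMap.finrank_range_le _)
  have hrankNullity := L.finrank_range_add_finrank_ker
  simp only [Module.finrank_fintype_fun_eq_card, Fintype.card_coe] at hrange hkerDim hrankNullity
  change _ ≤ Nat.card (Quotient s) + _
  rw [Nat.card_eq_fintype_card]
  omega

theorem isForest_of_card_eq {F : Finset G.E} {S : Finset G.V}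
    (hS : ∀ v, ∃ w ∈ S, G.Reach F w v) (hcard : Fintype.card G.V = S.card + F.card) :
    G.IsForest F ∧ ∀ v, ∃! w, w ∈ S ∧ G.Reach F w v := by
  let s := Relation.EqvGen.setoid (G.edgeRel F)
  let root : S → Quotient s := fun w => Quotient.mk s w
  have hroot : Function.Surjective root := Quotient.ind fun v =>
    let ⟨w, hw, hwv⟩ := hS v
    ⟨⟨w, hw⟩, Quotient.sound hwv⟩
  have hle : Nat.card (Quotient s) ≤ S.card := by
    simpa using Nat.card_le_card_of_surjective root hroot
  have hcomponents : Nat.card (Quotient s) = S.card := by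
    have : Fintype.card G.V ≤ Nat.card (Quotient s) + F.card := G.card_le_numComponents_add_card F
    omega
  have hinj := (hroot.bijective_of_nat_card_le (by simpa using hcomponents.ge)).1
  refine ⟨by rw [IsForest, numComponents, hcomponents, hcard], fun v => ?_⟩
  obtain ⟨w, hw, hwv⟩ := hS v
  refine ⟨w, ⟨hw, hwv⟩, fun w' ⟨hw', hw'v⟩ => ?_⟩
  have : root ⟨w', hw'⟩ = root ⟨w, hw⟩ := Quotient.sound (hw'v.trans _ _ _ (hwv.symm _ _))
  exact congrArg Subtype.val (hinj this)

variable (G) in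
def ReachesIn (F : Finset G.E) (S : Finset G.V) : ℕ → G.V → Prop
  | 0, v => v ∈ S
  | n + 1, v => ∃ u, G.edgeRel F v u ∧ ReachesIn F S n u

theorem exists_reachesIn_iff_of_reach {F : Finset G.E} {S : Finset G.V} {v w : G.V}
    (h : G.Reach F v w) : (∃ n, G.ReachesIn F S n v) ↔ ∃ n, G.ReachesIn F S n w := by
  induction h with
  | rel v w hvw =>
    exact ⟨fun ⟨n, hn⟩ => ⟨n + 1, v, edgeRel_comm.mp hvw, hn⟩, fun ⟨n, hn⟩ => ⟨n + 1, w, hvw, hn⟩⟩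
  | refl => rfl
  | symm _ _ _ ih => exact ih.symm
  | trans _ _ _ _ _ ih₁ ih₂ => exact ih₁.trans ih₂

theorem exists_height_of_forall_reach {F : Finset G.E} {S : Finset G.V}
    (hS : ∀ v, ∃ w ∈ S, G.Reach F w v) :
    ∃ h : G.V → ℕ, ∀ v ∉ S, ∃ u, G.edgeRel F v u ∧ h u < h v := by
  classical
  have hex : ∀ v, ∃ n, G.ReachesIn F S n v := fun v =>
    let ⟨w, hw, hwv⟩ := hS v
    (exists_reachesIn_iff_of_reach hwv).mp ⟨0, hw⟩
  refine ⟨fun v => Nat.find (hex v), fun v hv => ?_⟩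
  have hspec := Nat.find_spec (hex v)
  obtain ⟨n, hn⟩ : ∃ n, Nat.find (hex v) = n + 1 := by
    refine Nat.exists_eq_add_one.mpr (Nat.pos_of_ne_zero fun h0 => hv ?_)
    rwa [h0] at hspec
  rw [hn] at hspec
  obtain ⟨u, hvu, hu⟩ := hspec
  refine ⟨u, hvu, ?_⟩
  have := Nat.find_min' (hex u) hu
  show Nat.find (hex u) < Nat.find (hex v)
  omega

section Reduced

variable {E₀ : Finset G.E} {V₀ : Finset G.V} (ι : {e : G.E // e ∉ E₀} ≃ {v : G.V // v ∉ V₀})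

variable (G) in
def reducedIncidence : Matrix {e : G.E // e ∉ E₀} {e : G.E // e ∉ E₀} ℤ :=
  G.incidence.submatrix Subtype.val fun f => (ι f).1

theorem reducedIncidence_mulVec {y : G.V → ℤ} (hy : ∀ v ∈ V₀, y v = 0) (e : {e // e ∉ E₀}) :
    (G.reducedIncidence ι *ᵥ fun f => y (ι f)) e = y (G.head e) - y (G.tail e) := by
  rw [← incidence_mulVec]
  simp only [mulVec, dotProduct, reducedIncidence, submatrix_apply]
  rw [Equiv.sum_comp ι fun v => G.incidence e v * y v,
    ← Fintype.sum_subtype_add_sum_subtype (· ∈ V₀)]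
  simp [hy]

theorem exists_mem_reach_of_det_ne_zero (hdet : (G.reducedIncidence ι).det ≠ 0) (v : G.V) :
    ∃ w ∈ V₀, G.Reach E₀ᶜ w v := by
  classical
  by_contra! hv
  let y : G.V → ℤ := fun w => if G.Reach E₀ᶜ w v then 1 else 0
  have hv₀ : v ∉ V₀ := fun h => hv v h (.refl v)
  have hy : (fun f => y (ι f)) = 0 := by
    refine eq_zero_of_mulVec_eq_zero hdet (funext fun e => ?_)
    rw [reducedIncidence_mulVec ι fun w hw => if_neg (hv w hw), Pi.zero_apply, sub_eq_zero]
    have := reach_head_tail (Finset.mem_compl.mpr e.2)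
    exact if_congr ⟨(this.symm _ _).trans _ _ _, this.trans _ _ _⟩ rfl rfl
  have hyv : y v = 0 := by simpa using congrFun hy (ι.symm ⟨v, hv₀⟩)
  simp only [y, ite_eq_right_iff, one_ne_zero, imp_false] at hyv
  exact hyv (.refl v)

theorem abs_det_reducedIncidence_eq_one (hS : ∀ v, ∃ w ∈ V₀, G.Reach E₀ᶜ w v) :
    |(G.reducedIncidence ι).det| = 1 := by
  obtain ⟨h, hh⟩ := exists_height_of_forall_reach hS
  have hparent : ∀ v : {v // v ∉ V₀}, ∃ e : {e // e ∉ E₀},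
      G.incidence e v ≠ 0 ∧ ∀ w, G.incidence e w ≠ 0 → w = v ∨ h w < h v := by
    rintro ⟨v, hv⟩
    obtain ⟨u, ⟨e, he, hends⟩, hu⟩ := hh v hv
    refine ⟨⟨e, Finset.mem_compl.mp he⟩, ?_, fun w hw => ?_⟩
    all_goals simp only [incidence_ne_zero_iff] at *
    · rcases hends with ⟨rfl, -⟩ | ⟨-, rfl⟩ <;> simp
    · rcases hends with ⟨rfl, rfl⟩ | ⟨rfl, rfl⟩ <;> rcases hw with rfl | rfl <;> simp [hu]
  choose p hp_ne hp_lt using hparent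
  have hp : Function.Injective p := by
    intro v w hpvw
    by_contra hne
    have : v.1 ≠ w.1 := fun h => hne (Subtype.ext h)
    have hwv := (hp_lt v w (hpvw ▸ hp_ne w)).resolve_left this.symm
    have hvw := (hp_lt w v (hpvw ▸ hp_ne v)).resolve_left this
    omega
  let σ := Equiv.ofBijective p
    ((Fintype.bijective_iff_injective_and_card p).mpr ⟨hp, Fintype.card_congr ι.symm⟩)
  have hsub : G.reducedIncidence ι =
      (of fun v w : {v // v ∉ V₀} => G.incidence (σ v) w).submatrix σ.symm ι := by
    ext e f
    simp [reducedIncidence]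
  rw [hsub, abs_det_submatrix_equiv_equiv]
  refine abs_det_eq_one_of_ranking _ (fun v => h v) (fun v w hvw => ?_) fun v =>
    abs_incidence_of_ne_zero _ (hp_ne v)
  exact (hp_lt v w hvw).imp_left Subtype.ext

end Reduced

end Multigraph

theorem incidence_submatrix_det_tfae_general
    (G : Multigraph)
    (E₀ : Finset G.E) (V₀ : Finset G.V)
    (ι : {e : G.E // e ∉ E₀} ≃ {v : G.V // v ∉ V₀}) :
    letI B : Matrix G.E G.V ℤ :=
      Matrix.of fun e v => if G.head e = v then 1 else if G.tail e = v then -1 else 0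
    letI B' : Matrix {e : G.E // e ∉ E₀} {e : G.E // e ∉ E₀} ℤ :=
      Matrix.of fun e f => B e.1 (ι f).1
    List.TFAE
      [ B'.det = 1 ∨ B'.det = -1,
        B'.det ≠ 0,
        G.IsForest E₀ᶜ ∧ ∀ v : G.V, ∃! w : G.V, w ∈ V₀ ∧ G.Reach E₀ᶜ w v ] := by
  change List.TFAE [(G.reducedIncidence ι).det = 1 ∨ (G.reducedIncidence ι).det = -1,
    (G.reducedIncidence ι).det ≠ 0, _]
  have hcard : Fintype.card G.V = V₀.card + E₀ᶜ.card := by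
    have := Fintype.card_congr ι
    simp only [Fintype.card_subtype_compl, Fintype.card_coe] at this
    rw [Finset.card_compl]
    have := V₀.card_le_univ
    have := E₀.card_le_univ
    omega
  tfae_have 1 → 2 := by rintro (h | h) <;> simp [h]
  tfae_have 2 → 3 := fun h =>
    Multigraph.isForest_of_card_eq (Multigraph.exists_mem_reach_of_det_ne_zero ι h) hcard
  tfae_have 3 → 1 := fun ⟨_, h⟩ => (abs_eq zero_le_one).mp <|
    Multigraph.abs_det_reducedIncidence_eq_one ι fun v => (h v).exists
  tfae_finish

/-- For the incidence matrix `B` of a connected multigraph, with rows `E₀` and columns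
`V₀` deleted (the complements having equal size `r`, identified via a bijection `ι`),
the following are equivalent: (a) the determinant of the resulting square matrix is
`±1`; (b) it is nonzero; (c) the edges not in `E₀` form a spanning `|V₀|`-forest in
which each tree contains exactly one vertex of `V₀`. -/
theorem incidence_submatrix_det_tfae
    (G : Multigraph) (hG : G.Connected)
    (E₀ : Finset G.E) (V₀ : Finset G.V) (r : ℕ)
    (hE : Fintype.card {e : G.E // e ∉ E₀} = r)
    (hV : Fintype.card {v : G.V // v ∉ V₀} = r)
    (ι : {e : G.E // e ∉ E₀} ≃ {v : G.V // v ∉ V₀}) :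
    letI B : Matrix G.E G.V ℤ :=
      Matrix.of fun e v => if G.head e = v then 1 else if G.tail e = v then -1 else 0
    letI B' : Matrix {e : G.E // e ∉ E₀} {e : G.E // e ∉ E₀} ℤ :=
      Matrix.of fun e f => B e.1 (ι f).1
    List.TFAE
      [ B'.det = 1 ∨ B'.det = -1,
        B'.det ≠ 0,
        G.IsForest E₀ᶜ ∧ ∀ v : G.V, ∃! w : G.V, w ∈ V₀ ∧ G.Reach E₀ᶜ w v ] :=
  incidence_submatrix_det_tfae_general G E₀ V₀ ι
end
end

section
/- Let Γ be a finite connected multigraph without self-loops with sink v*, reduced Laplacian L', non-sink degree vector d, and let σ ∈ ℤ^{V'} be a sandpile. If u₁, u₂ ∈ ℝ^{V'} both satisfy σ − L'u ≤ d − 1 and u ≥ 0 (componentwise), then u := min(u₁, u₂) (componentwise minimum) also satisfies σ − L'u ≤ d − 1 and u ≥ 0. -/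
open Matrix

noncomputable section

/-- If `u₁` and `u₂` both satisfy `σ - L'u ≤ d - 1` and `u ≥ 0` (componentwise, over
`ℝ`), then so does the componentwise minimum `min(u₁, u₂)`. -/
theorem min_of_solutions_is_solution
    (G : Multigraph) (hG : G.Connected) (s : G.V)
    (σ : {v : G.V // v ≠ s} → ℤ) (hσ : ∀ v, 0 ≤ σ v)
    (u₁ u₂ : {v : G.V // v ≠ s} → ℝ)
    (h₁0 : ∀ v, 0 ≤ u₁ v)
    (h₁ : ∀ v, (σ v : ℝ) - ((G.reducedLaplacian s).map ((↑) : ℤ → ℝ)).mulVec u₁ v ≤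
      (G.degree v.1 : ℝ) - 1)
    (h₂0 : ∀ v, 0 ≤ u₂ v)
    (h₂ : ∀ v, (σ v : ℝ) - ((G.reducedLaplacian s).map ((↑) : ℤ → ℝ)).mulVec u₂ v ≤
      (G.degree v.1 : ℝ) - 1) :
    (∀ v, 0 ≤ min (u₁ v) (u₂ v)) ∧
      ∀ v, (σ v : ℝ) -
          ((G.reducedLaplacian s).map ((↑) : ℤ → ℝ)).mulVec (fun w => min (u₁ w) (u₂ w)) v ≤
        (G.degree v.1 : ℝ) - 1 := by
  refine ⟨fun v => le_min (h₁0 v) (h₂0 v), fun v => ?_⟩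
  set M := (G.reducedLaplacian s).map ((↑) : ℤ → ℝ) with hM
  have key : ∀ u : {v : G.V // v ≠ s} → ℝ,
      min (u₁ v) (u₂ v) = u v → (∀ w, min (u₁ w) (u₂ w) ≤ u w) →
      M.mulVec u v ≤ M.mulVec (fun w => min (u₁ w) (u₂ w)) v := by
    intro u hv hle
    unfold Matrix.mulVec dotProduct
    apply Finset.sum_le_sum
    intro w _
    by_cases hw : w = v
    · subst hw; simp only []; rw [hv]
    · have hvw : v.1 ≠ w.1 := fun h => hw (Subtype.ext h.symm)
      have hMle : M v w ≤ 0 := by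
        have : M v w = -((G.edgeCount v.1 w.1 : ℤ) : ℝ) := by
          simp [hM, Multigraph.reducedLaplacian, Multigraph.laplacian, hvw]
        rw [this]
        simp
      exact mul_le_mul_of_nonpos_left (hle w) hMle
  rcases le_total (u₁ v) (u₂ v) with h | h
  · have := key u₁ (min_eq_left h) (fun w => min_le_left _ _)
    linarith [h₁ v]
  · have := key u₂ (min_eq_right h) (fun w => min_le_right _ _)
    linarith [h₂ v]
end
end

section
/- Let Γ be a finite connected multigraph without self-loops with sink, reduced Laplacian L', and degree vector d on the non-sink vertices V'. Suppose σ ∈ ℤ^{V'} is uniformly large, i.e., σ ≥ d − 1 componentwise. Then the vector ũ := (L')^{-1}(σ − d + 1) ∈ ℝ^{V'} is the unique minimal element (with respect to the componentwise order) of the set { u ∈ ℝ^{V'} : σ − L'u ≤ d − 1 and u ≥ 0 }. -/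
open Matrix

noncomputable section

namespace Multigraph
variable (G : Multigraph)

lemma edgeCount_eq (v w : G.V) :
    G.edgeCount v w = (Finset.univ.filter fun e =>
      (G.head e = v ∧ G.tail e = w) ∨ (G.head e = w ∧ G.tail e = v)).card := by
  rw [edgeCount, Nat.card_eq_fintype_card, Fintype.card_subtype]

lemma edgeCount_self (v : G.V) : G.edgeCount v v = 0 := by
  rw [edgeCount_eq, Finset.card_eq_zero, Finset.filter_eq_empty_iff]
  rintro e - (⟨h1, h2⟩ | ⟨h1, h2⟩) <;> exact G.loopless e (h1.trans h2.symm)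

lemma edgeCount_pos (v w : G.V) (h : G.edgeRel Finset.univ v w) : 0 < G.edgeCount v w := by
  rw [edgeCount_eq, Finset.card_pos]
  obtain ⟨e, -, he⟩ := h
  exact ⟨e, Finset.mem_filter.2 ⟨Finset.mem_univ e, he⟩⟩

lemma edgeRel_symm {F : Finset G.E} {v w : G.V} (h : G.edgeRel F v w) : G.edgeRel F w v := by
  obtain ⟨e, he, h'⟩ := h
  exact ⟨e, he, h'.symm⟩

lemma degree_eq_sum (v : G.V) : G.degree v = ∑ w : G.V, G.edgeCount v w := by
  rw [degree, Nat.card_eq_fintype_card, Fintype.card_subtype]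
  rw [Finset.card_eq_sum_card_fiberwise
    (f := fun e => if G.head e = v then G.tail e else G.head e) (t := Finset.univ)
    (fun e _ => Finset.mem_univ _)]
  refine Finset.sum_congr rfl fun w _ => ?_
  rw [edgeCount_eq]
  congr 1
  ext e
  simp only [Finset.mem_filter, Finset.mem_univ, true_and]
  constructor
  · rintro ⟨h1 | h1, h2⟩
    · rw [if_pos h1] at h2
      exact Or.inl ⟨h1, h2⟩
    · by_cases hh : G.head e = v
      · rw [if_pos hh] at h2
        exact Or.inl ⟨hh, h2⟩
      · rw [if_neg hh] at h2
        exact Or.inr ⟨h2, h1⟩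
  · rintro (⟨h1, h2⟩ | ⟨h1, h2⟩)
    · exact ⟨Or.inl h1, by rw [if_pos h1]; exact h2⟩
    · refine ⟨Or.inr h2, ?_⟩
      have hh : G.head e ≠ v := fun hh => G.loopless e (hh.trans h2.symm)
      rw [if_neg hh]
      exact h1


lemma sum_split (s : G.V) (f : G.V → ℝ) :
    ∑ w : G.V, f w = (∑ w : {w : G.V // w ≠ s}, f w.1) + f s := by
  rw [← Finset.sum_subtype (Finset.univ.filter fun w => w ≠ s) (by simp) f,
    Finset.filter_ne', Finset.sum_erase_add]
  exact Finset.mem_univ s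

lemma mulVec_formula (s : G.V) (x : {v : G.V // v ≠ s} → ℝ) (v : {v : G.V // v ≠ s}) :
    ((G.reducedLaplacian s).map ((↑) : ℤ → ℝ)).mulVec x v
      = ∑ w : G.V, (G.edgeCount v.1 w : ℝ) *
          (x v - (if hw : w = s then 0 else x ⟨w, hw⟩)) := by
  classical
  set xb : G.V → ℝ := fun w => if hw : w = s then 0 else x ⟨w, hw⟩ with hxb
  have hA : ∀ w : {v : G.V // v ≠ s},
      ((G.reducedLaplacian s).map ((↑) : ℤ → ℝ)) v w
        = (if v = w then (G.degree v.1 : ℝ) else 0) - (G.edgeCount v.1 w.1 : ℝ) := by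
    intro w
    simp only [Matrix.map_apply, reducedLaplacian, laplacian, Matrix.of_apply]
    by_cases hvw : v = w
    · subst hvw; simp [G.edgeCount_self]
    · have h1 : v.1 ≠ w.1 := fun h => hvw (Subtype.ext h)
      simp [h1, hvw]
  have hx : ∀ w : {v : G.V // v ≠ s}, xb w.1 = x w := by
    intro w; simp [hxb, w.2]
  have hdeg : (G.degree v.1 : ℝ) = ∑ w : G.V, (G.edgeCount v.1 w : ℝ) := by
    rw [G.degree_eq_sum v.1]; push_cast; ring
  have hsum : ∑ w : G.V, (G.edgeCount v.1 w : ℝ) * xb w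
      = ∑ w : {v : G.V // v ≠ s}, (G.edgeCount v.1 w.1 : ℝ) * x w := by
    rw [G.sum_split s (fun w => (G.edgeCount v.1 w : ℝ) * xb w)]
    have hxs : xb s = 0 := by simp [hxb]
    rw [hxs, mul_zero, add_zero]
    exact Finset.sum_congr rfl fun w _ => by rw [hx w]
  calc ((G.reducedLaplacian s).map ((↑) : ℤ → ℝ)).mulVec x v
      = ∑ w : {v : G.V // v ≠ s},
          ((if v = w then (G.degree v.1 : ℝ) else 0) - (G.edgeCount v.1 w.1 : ℝ)) * x w := by
        simp only [Matrix.mulVec, dotProduct]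
        exact Finset.sum_congr rfl fun w _ => by rw [hA w]
    _ = (G.degree v.1 : ℝ) * x v
          - ∑ w : {v : G.V // v ≠ s}, (G.edgeCount v.1 w.1 : ℝ) * x w := by
        simp only [sub_mul, Finset.sum_sub_distrib, ite_mul, zero_mul,
          Finset.sum_ite_eq, Finset.mem_univ, if_true]
    _ = ∑ w : G.V, (G.edgeCount v.1 w : ℝ) * (x v - xb w) := by
        rw [← hsum, hdeg]
        rw [Finset.sum_mul]
        rw [← Finset.sum_sub_distrib]
        exact Finset.sum_congr rfl fun w _ => by ring

lemma mono (hG : G.Connected) (s : G.V) (x : {v : G.V // v ≠ s} → ℝ)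
    (h : ∀ v, 0 ≤ ((G.reducedLaplacian s).map ((↑) : ℤ → ℝ)).mulVec x v) :
    ∀ v, 0 ≤ x v := by
  classical
  intro v₀
  by_contra h0
  push_neg at h0
  set xb : G.V → ℝ := fun w => if hw : w = s then 0 else x ⟨w, hw⟩ with hxb
  obtain ⟨v₁, -, hv₁⟩ := Finset.exists_min_image Finset.univ xb ⟨s, Finset.mem_univ s⟩
  set m : ℝ := xb v₁ with hm
  have hmle : ∀ w : G.V, m ≤ xb w := fun w => hv₁ w (Finset.mem_univ w)
  have hmneg : m < 0 := lt_of_le_of_lt (hmle v₀.1) (by simp [hxb, v₀.2]; exact h0)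
  -- closure: if xb a = m and a—b then xb b = m
  have hclosed : ∀ a b : G.V, G.edgeRel Finset.univ a b → xb a = m → xb b = m := by
    intro a b hab ha
    have has : a ≠ s := by
      intro h'; rw [h'] at ha; simp [hxb] at ha; exact absurd ha.symm (ne_of_lt hmneg)
    have hkey := h ⟨a, has⟩
    rw [G.mulVec_formula s x ⟨a, has⟩] at hkey
    have hxa : x ⟨a, has⟩ = m := by rw [← ha]; simp [hxb, has]
    have hterm : ∀ w ∈ Finset.univ,
        (G.edgeCount a w : ℝ) * (x ⟨a, has⟩ - (if hw : w = s then 0 else x ⟨w, hw⟩)) ≤ 0 := by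
      intro w _
      apply mul_nonpos_of_nonneg_of_nonpos (by positivity)
      rw [hxa]
      have := hmle w
      simp only [hxb] at this
      linarith
    have hzero := (Finset.sum_eq_zero_iff_of_nonpos hterm).1
      (le_antisymm (Finset.sum_nonpos hterm) hkey)
    have hb := hzero b (Finset.mem_univ b)
    have hcb : (0 : ℝ) < (G.edgeCount a b : ℝ) := by
      exact_mod_cast G.edgeCount_pos a b hab
    have : x ⟨a, has⟩ - (if hw : b = s then 0 else x ⟨b, hw⟩) = 0 := by
      by_contra h'
      exact h' (by
        have := mul_eq_zero.1 hb
        rcases this with h'' | h''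
        · exact absurd h'' (ne_of_gt hcb)
        · exact h'')
    rw [hxa] at this
    simp only [hxb]
    linarith [this]
  -- propagate along Reach
  have hreach : ∀ a b : G.V, G.Reach Finset.univ a b → (xb a = m ↔ xb b = m) := by
    intro a b hr
    induction hr with
    | rel a b hab => exact ⟨hclosed a b hab, hclosed b a (G.edgeRel_symm hab)⟩
    | refl a => exact Iff.rfl
    | symm a b _ ih => exact ih.symm
    | trans a b c _ _ ih1 ih2 => exact ih1.trans ih2
  have hs : xb s = m := (hreach v₁ s (hG v₁ s)).1 hm.symm
  simp [hxb] at hs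
  exact absurd hs.symm (ne_of_lt hmneg)

end Multigraph

/-- If `σ` is uniformly large (`σ ≥ d - 1`), then `ũ = (L')⁻¹ (σ - d + 1)` is the
unique componentwise-minimal element of `{u : ℝ^{V'} | σ - L'u ≤ d - 1, u ≥ 0}`. -/
theorem odometer_of_uniformly_large
    (G : Multigraph) (hG : G.Connected) (s : G.V)
    (σ : {v : G.V // v ≠ s} → ℤ)
    (hσ : ∀ v : {v : G.V // v ≠ s}, (G.degree v.1 : ℤ) - 1 ≤ σ v) :
    letI A : Matrix {v : G.V // v ≠ s} {v : G.V // v ≠ s} ℝ :=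
      (G.reducedLaplacian s).map ((↑) : ℤ → ℝ)
    letI u : {v : G.V // v ≠ s} → ℝ :=
      A⁻¹.mulVec fun v => (σ v : ℝ) - (G.degree v.1 : ℝ) + 1
    ((∀ v, 0 ≤ u v) ∧
        (∀ v, (σ v : ℝ) - A.mulVec u v ≤ (G.degree v.1 : ℝ) - 1)) ∧
      ∀ w : {v : G.V // v ≠ s} → ℝ,
        (∀ v, 0 ≤ w v) →
        (∀ v, (σ v : ℝ) - A.mulVec w v ≤ (G.degree v.1 : ℝ) - 1) →
        ∀ v, u v ≤ w v := by
  classical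
  have hmono := G.mono hG s
  set A := (G.reducedLaplacian s).map ((↑) : ℤ → ℝ) with hAdef
  set b : {v : G.V // v ≠ s} → ℝ := fun v => (σ v : ℝ) - (G.degree v.1 : ℝ) + 1 with hb
  set u := A⁻¹.mulVec b with hudef
  have hbnn : ∀ v, 0 ≤ b v := by
    intro v
    have h1 := hσ v
    have h2 : ((G.degree v.1 : ℤ) : ℝ) - 1 ≤ (σ v : ℝ) := by exact_mod_cast h1
    push_cast at h2
    simp only [hb]
    linarith
  have hdet : IsUnit A.det := by
    rw [isUnit_iff_ne_zero]
    intro hd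
    obtain ⟨y, hy, hy0⟩ := Matrix.exists_mulVec_eq_zero_iff.2 hd
    apply hy
    funext v
    have h1 := hmono y (fun w => by rw [hy0]; exact le_refl 0)
    have h2 := hmono (-y) (fun w => by rw [Matrix.mulVec_neg, hy0]; simp)
    have := h1 v
    have := h2 v
    simp only [Pi.neg_apply, Pi.zero_apply] at *
    linarith
  have hAu : A.mulVec u = b := by
    rw [hudef, Matrix.mulVec_mulVec, Matrix.mul_nonsing_inv _ hdet, Matrix.one_mulVec]
  refine ⟨⟨?_, ?_⟩, ?_⟩
  · exact hmono u (fun w => by rw [hAu]; exact hbnn w)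
  · intro v
    rw [hAu]
    simp only [hb]
    linarith
  · intro w hw0 hw v
    have hge : ∀ v, 0 ≤ A.mulVec (w - u) v := by
      intro v'
      rw [Matrix.mulVec_sub, Pi.sub_apply, hAu]
      have := hw v'
      simp only [hb]
      linarith
    have := hmono (w - u) hge v
    simp only [Pi.sub_apply] at this
    linarith
end
end

section
/- Let n ≥ 2 and let L' be the n×n matrix with diagonal entries n and off-diagonal entries −1 (the reduced Laplacian of the complete graph K_{n+1}). A vector σ ∈ ℤⁿ lies in the image of L' : ℤⁿ → ℤⁿ if and only if σ_i ≡ σ_j (mod n+1) for all 1 ≤ i, j ≤ n. -/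
open Matrix

lemma mulVec_entry (n : ℕ) (a : Fin n → ℤ) (i : Fin n) :
    (Matrix.of fun i j : Fin n => if i = j then (n : ℤ) else -1).mulVec a i
      = ((n : ℤ) + 1) * a i - ∑ j, a j := by
  simp only [Matrix.mulVec, dotProduct, Matrix.of_apply]
  have h : ∀ j : Fin n, (if i = j then (n : ℤ) else -1) * a j
      = ((n : ℤ) + 1) * (if i = j then a j else 0) - a j := by
    intro j; split <;> ring
  rw [Finset.sum_congr rfl fun j _ => h j, Finset.sum_sub_distrib, ← Finset.mul_sum,
    Finset.sum_ite_eq]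
  simp

/-- For the complete graph `K_{n+1}` with reduced Laplacian `L'` (the `n × n` integer
matrix with `n` on the diagonal and `-1` off the diagonal), a vector `σ ∈ ℤⁿ` is in
the image of `L' : ℤⁿ → ℤⁿ` iff all its entries are congruent mod `n + 1`. -/
theorem complete_image_of_reducedLaplacian (n : ℕ) (hn : 2 ≤ n) (σ : Fin n → ℤ) :
    (∃ a : Fin n → ℤ,
        (Matrix.of fun i j : Fin n => if i = j then (n : ℤ) else -1).mulVec a = σ) ↔
      ∀ i j : Fin n, σ i ≡ σ j [ZMOD ((n : ℤ) + 1)] := by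
  constructor
  · rintro ⟨a, rfl⟩ i j
    rw [Int.modEq_iff_dvd]
    refine ⟨a j - a i, ?_⟩
    rw [mulVec_entry, mulVec_entry]
    ring
  · intro h
    have hd : ∀ i : Fin n, ((n : ℤ) + 1) ∣ σ i + ∑ j, σ j := by
      intro i
      have he : σ i + ∑ j, σ j = ((n : ℤ) + 1) * σ i + ∑ j, (σ j - σ i) := by
        rw [Finset.sum_sub_distrib, Finset.sum_const, Finset.card_fin]
        ring
      rw [he]
      exact dvd_add ⟨σ i, rfl⟩ (Finset.dvd_sum fun j _ => (h i j).dvd)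
    set a : Fin n → ℤ := fun i => (σ i + ∑ j, σ j) / ((n : ℤ) + 1) with ha
    have hmul : ∀ i, ((n : ℤ) + 1) * a i = σ i + ∑ j, σ j := fun i =>
      Int.mul_ediv_cancel' (hd i)
    have hpos : ((n : ℤ) + 1) ≠ 0 := by positivity
    have hS : ∑ j, a j = ∑ j, σ j := by
      apply mul_left_cancel₀ hpos
      rw [Finset.mul_sum, Finset.sum_congr rfl fun j _ => hmul j,
        Finset.sum_add_distrib, Finset.sum_const, Finset.card_fin]
      ring
    refine ⟨a, ?_⟩
    funext i
    rw [mulVec_entry, hS, hmul]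
    ring
end

section
/- Let C(P_k) be the cone over a path on k vertices (equivalently, the wheel graph on k+2 vertices with one boundary edge deleted). For every k ≥ 1, the number of spanning trees of C(P_k) is F_{2k}, the 2k-th Fibonacci number. -/
open Matrix

noncomputable section

/-- The cone over the path on `k` vertices: vertex `0` is the cone point, the path
vertices are `1, …, k`; there are `k` spoke edges and `k - 1` path edges. -/
def conePath (k : ℕ) : Multigraph where
  V := Fin (k + 1)
  E := Fin k ⊕ Fin (k - 1)
  fintypeV := inferInstance
  decEqV := inferInstance
  fintypeE := inferInstance
  decEqE := inferInstance
  head := Sum.elim (fun _ => 0) (fun j => ⟨j.1 + 1, by omega⟩)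
  tail := Sum.elim (fun i => ⟨i.1 + 1, by omega⟩) (fun j => ⟨j.1 + 2, by omega⟩)
  loopless := by
    rintro (i | j) <;> simp [Fin.ext_iff]

/-!
Record an edge set by its spokes `S` and its path edges `P`. The path edges cut the path into
blocks of consecutive vertices; the edge set connects the graph iff every block contains a spoke,
and since there are `k - #P` blocks, it moreover has `k` edges iff every block contains exactly one
spoke. Scanning the path from left to right, let `g n` and `b n` count the configurations on the
first `n` vertices in which every block has exactly one spoke, resp. every block but the last,
which has none. The next vertex starts a new block or joins the last one, and carries a spoke or
not; hence `g (n + 1) = 2 g n + b n` and `b (n + 1) = g n + b n`, and from `g 1 = b 1 = 1` we get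
`g n = F (2n)` and `b n = F (2n - 1)`.
-/

open Finset

namespace Multigraph

variable {G : Multigraph} {F : Finset G.E}

lemma reach_of_mem {e : G.E} (he : e ∈ F) : G.Reach F (G.head e) (G.tail e) :=
  .rel _ _ ⟨e, he, .inl ⟨rfl, rfl⟩⟩

lemma Reach.iff_of_forall_mem {p : G.V → Prop} (hp : ∀ e ∈ F, (p (G.head e) ↔ p (G.tail e)))
    {v w : G.V} (h : G.Reach F v w) : p v ↔ p w := by
  induction h with
  | rel v w h =>
    obtain ⟨e, he, ⟨rfl, rfl⟩ | ⟨rfl, rfl⟩⟩ := h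
    exacts [hp e he, (hp e he).symm]
  | refl => rfl
  | symm _ _ _ ih => exact ih.symm
  | trans _ _ _ _ _ ih₁ ih₂ => exact ih₁.trans ih₂

lemma reach_of_forall_reach {s : G.V} (h : ∀ v, G.Reach F s v) (v w : G.V) : G.Reach F v w :=
  .trans _ _ _ (.symm _ _ (h v)) (h w)

end Multigraph

namespace Finset

lemma forall_card_fiber_eq_one_iff {α β : Type*} [DecidableEq β] {s : Finset α}
    {t : Finset β} {f : α → β} (hf : ∀ a ∈ s, f a ∈ t) :
    (∀ b ∈ t, #{a ∈ s | f a = b} = 1) ↔ (∀ b ∈ t, ∃ a ∈ s, f a = b) ∧ #s = #t := by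
  have hsum : #s = ∑ b ∈ t, #{a ∈ s | f a = b} := card_eq_sum_card_fiberwise hf
  constructor
  · intro h
    refine ⟨fun b hb => ?_, by rw [hsum, sum_congr rfl h, card_eq_sum_ones]⟩
    obtain ⟨a, ha⟩ := card_pos.mp (h b hb).ge
    exact ⟨a, (mem_filter.mp ha).1, (mem_filter.mp ha).2⟩
  · rintro ⟨hsurj, hcard⟩
    have hpos : ∀ b ∈ t, 1 ≤ #{a ∈ s | f a = b} := fun b hb => by
      obtain ⟨a, ha, rfl⟩ := hsurj b hb
      exact card_pos.mpr ⟨a, mem_filter.mpr ⟨ha, rfl⟩⟩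
    rw [hsum, card_eq_sum_ones] at hcard
    exact fun b hb => ((sum_eq_sum_iff_of_le hpos).mp hcard.symm b hb).symm

end Finset

/-- Path edge `j` joins positions `j` and `j + 1`; `blockIndex P i` numbers, from left to right,
the maximal run of positions joined by edges of `P` that contains `i`. -/
def blockIndex (P : Finset ℕ) (i : ℕ) : ℕ := #(range i \ P)

section Blocks

variable {P : Finset ℕ} {i j n : ℕ}

lemma blockIndex_succ (P : Finset ℕ) (i : ℕ) :
    blockIndex P (i + 1) = blockIndex P i + if i ∈ P then 0 else 1 := by
  unfold blockIndex
  rw [range_add_one]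
  split_ifs with h
  · rw [insert_sdiff_of_mem _ h, add_zero]
  · rw [insert_sdiff_of_notMem _ h, card_insert_of_notMem (by simp)]

lemma blockIndex_mono (P : Finset ℕ) : Monotone (blockIndex P) := fun _ _ h =>
  card_le_card (sdiff_subset_sdiff (range_subset_range.mpr h) le_rfl)

lemma blockIndex_insert_of_le (h : i ≤ n) : blockIndex (insert n P) i = blockIndex P i := by
  rw [blockIndex, sdiff_insert, erase_eq_of_notMem (by simp; omega), blockIndex]

lemma blockIndex_of_subset_range (hP : P ⊆ range n) : blockIndex P n = n - #P := by
  rw [blockIndex, card_sdiff_of_subset hP, card_range]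

lemma image_blockIndex_range (P : Finset ℕ) (n : ℕ) :
    (range (n + 1)).image (blockIndex P) = range (blockIndex P n + 1) := by
  induction n with
  | zero => simp [blockIndex]
  | succ n ih =>
    rw [range_add_one, image_insert, ih, blockIndex_succ]
    split_ifs
    · simp
    · rw [← range_add_one]

lemma mem_of_blockIndex_eq (hij : i ≤ j) (h : blockIndex P i = blockIndex P (j + 1)) :
    j ∈ P := by
  by_contra hj
  have := blockIndex_mono P hij
  rw [blockIndex_succ, if_neg hj] at h
  omega

lemma blockIndex_succ_of_subset_range (hP : P ⊆ range n) :
    blockIndex P (n + 1) = blockIndex P n + 1 := by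
  rw [blockIndex_succ, if_neg fun h => by simpa using hP h]

lemma blockIndex_insert_succ : blockIndex (insert n P) (n + 1) = blockIndex P n := by
  rw [blockIndex_succ, if_pos (mem_insert_self n P), add_zero, blockIndex_insert_of_le le_rfl]

end Blocks

section Spokes

def spokesInBlock (S P : Finset ℕ) (b : ℕ) : ℕ := #{j ∈ S | blockIndex P j = b}

/-- On the positions `0, …, n`, every block has exactly one spoke in `S`, except the last block,
which has `m`. -/
def HasBlockSpokes (n m : ℕ) (S P : Finset ℕ) : Prop :=
  ∀ i ≤ n, spokesInBlock S P (blockIndex P i) =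
    if blockIndex P i = blockIndex P n then m else 1

instance (n m : ℕ) (S P : Finset ℕ) : Decidable (HasBlockSpokes n m S P) := by
  unfold HasBlockSpokes; infer_instance

variable {S P : Finset ℕ} {n m : ℕ}

lemma spokesInBlock_insert_path (hS : S ⊆ range (n + 1)) (b : ℕ) :
    spokesInBlock S (insert n P) b = spokesInBlock S P b := by
  unfold spokesInBlock
  congr 1
  refine filter_congr fun j hj => ?_
  rw [blockIndex_insert_of_le (mem_range_succ_iff.mp (hS hj))]

lemma spokesInBlock_insert_spoke (hS : S ⊆ range (n + 1)) (P : Finset ℕ) (b : ℕ) :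
    spokesInBlock (insert (n + 1) S) P b =
      spokesInBlock S P b + if blockIndex P (n + 1) = b then 1 else 0 := by
  unfold spokesInBlock
  rw [filter_insert]
  split_ifs
  · rw [card_insert_of_notMem fun h => by simpa using hS (mem_filter.mp h).1]
  · rfl

lemma spokesInBlock_eq_zero (hS : S ⊆ range (n + 1)) {b : ℕ} (hb : blockIndex P n < b) :
    spokesInBlock S P b = 0 :=
  card_eq_zero.mpr <| filter_eq_empty_iff.mpr fun _ hj =>
    (lt_of_le_of_lt (blockIndex_mono P (mem_range_succ_iff.mp (hS hj))) hb).ne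

lemma hasBlockSpokes_succ_iff :
    HasBlockSpokes (n + 1) m S P ↔ spokesInBlock S P (blockIndex P (n + 1)) = m ∧
      ∀ i ≤ n, spokesInBlock S P (blockIndex P i) =
        if blockIndex P i = blockIndex P (n + 1) then m else 1 := by
  refine ⟨fun h => ⟨by simpa using h (n + 1) le_rfl, fun i hi => h i (by omega)⟩, ?_⟩
  rintro ⟨hlast, h⟩ i hi
  rcases Nat.le_succ_iff.mp hi with hi | rfl
  · exact h i hi
  · simpa using hlast

lemma hasBlockSpokes_succ (hS : S ⊆ range (n + 1)) (hP : P ⊆ range n) :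
    HasBlockSpokes (n + 1) m S P ↔ m = 0 ∧ HasBlockSpokes n 1 S P := by
  have hnew := blockIndex_succ_of_subset_range hP
  rw [hasBlockSpokes_succ_iff, spokesInBlock_eq_zero hS (by omega), eq_comm]
  refine and_congr_right fun _ => forall₂_congr fun i hi => ?_
  have := blockIndex_mono P hi
  rw [if_neg (by omega), ite_self]

lemma hasBlockSpokes_succ_insert_spoke (hS : S ⊆ range (n + 1)) (hP : P ⊆ range n) :
    HasBlockSpokes (n + 1) m (insert (n + 1) S) P ↔ m = 1 ∧ HasBlockSpokes n 1 S P := by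
  have hnew := blockIndex_succ_of_subset_range hP
  simp only [hasBlockSpokes_succ_iff, spokesInBlock_insert_spoke hS,
    spokesInBlock_eq_zero hS (show blockIndex P n < blockIndex P (n + 1) by omega)]
  refine and_congr (by simp [eq_comm]) (forall₂_congr fun i hi => ?_)
  have := blockIndex_mono P hi
  rw [if_neg (by omega), if_neg (by omega), add_zero, ite_self]

lemma hasBlockSpokes_succ_insert_path (hS : S ⊆ range (n + 1)) :
    HasBlockSpokes (n + 1) m S (insert n P) ↔ HasBlockSpokes n m S P := by
  rw [hasBlockSpokes_succ_iff, blockIndex_insert_succ]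
  simp only [spokesInBlock_insert_path hS]
  rw [and_iff_right_of_imp fun h => by simpa [blockIndex_insert_of_le] using h n le_rfl]
  refine forall₂_congr fun i hi => ?_
  rw [blockIndex_insert_of_le hi]

lemma hasBlockSpokes_succ_insert_spoke_path (hS : S ⊆ range (n + 1)) :
    HasBlockSpokes (n + 1) m (insert (n + 1) S) (insert n P) ↔
      1 ≤ m ∧ HasBlockSpokes n (m - 1) S P := by
  rw [hasBlockSpokes_succ_iff, blockIndex_insert_succ]
  simp only [spokesInBlock_insert_spoke hS, blockIndex_insert_succ, spokesInBlock_insert_path hS]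
  rw [and_iff_right_of_imp fun h => by simpa [blockIndex_insert_of_le] using h n le_rfl]
  constructor
  · intro h
    have hm := h n le_rfl
    simp only [blockIndex_insert_of_le le_rfl, if_true] at hm
    refine ⟨by omega, fun i hi => ?_⟩
    have := h i hi
    rw [blockIndex_insert_of_le hi] at this
    split_ifs at this ⊢ <;> omega
  · rintro ⟨hm, h⟩ i hi
    have := h i hi
    rw [blockIndex_insert_of_le hi]
    split_ifs at this ⊢ <;> omega

end Spokes

section Count

def blockSpokeCount (n m : ℕ) : ℕ :=
  #{q ∈ (range (n + 1)).powerset ×ˢ (range n).powerset | HasBlockSpokes n m q.1 q.2}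

lemma blockSpokeCount_eq_sum (n m : ℕ) :
    blockSpokeCount n m = ∑ S ∈ (range (n + 1)).powerset, ∑ P ∈ (range n).powerset,
      if HasBlockSpokes n m S P then 1 else 0 := by
  rw [blockSpokeCount, card_filter, sum_product]

lemma sum_powerset_range_succ {M : Type*} [AddCommMonoid M] (n : ℕ) (f : Finset ℕ → M) :
    ∑ s ∈ (range (n + 1)).powerset, f s = ∑ s ∈ (range n).powerset, (f s + f (insert n s)) := by
  rw [range_add_one, sum_powerset_insert notMem_range_self, sum_add_distrib]

lemma blockSpokeCount_succ (n m : ℕ) :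
    blockSpokeCount (n + 1) m = ∑ S ∈ (range (n + 1)).powerset, ∑ P ∈ (range n).powerset,
      ((if m = 0 ∧ HasBlockSpokes n 1 S P then 1 else 0) +
        (if HasBlockSpokes n m S P then 1 else 0) +
        (if m = 1 ∧ HasBlockSpokes n 1 S P then 1 else 0) +
        (if 1 ≤ m ∧ HasBlockSpokes n (m - 1) S P then 1 else 0)) := by
  rw [blockSpokeCount_eq_sum, sum_powerset_range_succ]
  refine sum_congr rfl fun S hS => ?_
  rw [mem_powerset] at hS
  rw [sum_powerset_range_succ, sum_powerset_range_succ, ← sum_add_distrib]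
  refine sum_congr rfl fun P hP => ?_
  rw [mem_powerset] at hP
  simp only [hasBlockSpokes_succ hS hP, hasBlockSpokes_succ_insert_path hS,
    hasBlockSpokes_succ_insert_spoke hS hP, hasBlockSpokes_succ_insert_spoke_path hS]
  ring

lemma blockSpokeCount_succ_zero (n : ℕ) :
    blockSpokeCount (n + 1) 0 = blockSpokeCount n 1 + blockSpokeCount n 0 := by
  simp [blockSpokeCount_succ, blockSpokeCount_eq_sum n, sum_add_distrib]

lemma blockSpokeCount_succ_one (n : ℕ) :
    blockSpokeCount (n + 1) 1 = 2 * blockSpokeCount n 1 + blockSpokeCount n 0 := by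
  simp [blockSpokeCount_succ, blockSpokeCount_eq_sum n, sum_add_distrib]
  ring

lemma blockSpokeCount_eq_fib (n : ℕ) :
    blockSpokeCount n 1 = Nat.fib (2 * n + 2) ∧ blockSpokeCount n 0 = Nat.fib (2 * n + 1) := by
  induction n with
  | zero => exact ⟨by decide, by decide⟩
  | succ n ih =>
    have h3 : Nat.fib (2 * n + 3) = Nat.fib (2 * n + 1) + Nat.fib (2 * n + 2) := Nat.fib_add_two
    have h4 : Nat.fib (2 * n + 4) = Nat.fib (2 * n + 2) + Nat.fib (2 * n + 3) := Nat.fib_add_two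
    rw [blockSpokeCount_succ_one, blockSpokeCount_succ_zero, ih.1, ih.2,
      show 2 * (n + 1) + 2 = 2 * n + 4 by ring, show 2 * (n + 1) + 1 = 2 * n + 3 by ring]
    omega

end Count

namespace conePath

variable {k : ℕ} (T : Finset (Fin k ⊕ Fin (k - 1)))

-- Spoke `i` ends at vertex `i + 1`, which is position `i` for `blockIndex`.
def spokeSet : Finset ℕ := T.toLeft.image Fin.val

def pathSet : Finset ℕ := T.toRight.image Fin.val

variable {T}

lemma mem_spokeSet {i : ℕ} : i ∈ spokeSet T ↔ ∃ h : i < k, Sum.inl ⟨i, h⟩ ∈ T := by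
  simp [spokeSet, Fin.exists_iff]

lemma mem_pathSet {j : ℕ} : j ∈ pathSet T ↔ ∃ h : j < k - 1, Sum.inr ⟨j, h⟩ ∈ T := by
  simp [pathSet, Fin.exists_iff]

lemma spokeSet_subset_range : spokeSet T ⊆ range k := fun _ hi => by
  obtain ⟨h, -⟩ := mem_spokeSet.mp hi
  exact mem_range.mpr h

lemma pathSet_subset_range : pathSet T ⊆ range (k - 1) := fun _ hj => by
  obtain ⟨h, -⟩ := mem_pathSet.mp hj
  exact mem_range.mpr h

lemma card_spokeSet_add_card_pathSet : #(spokeSet T) + #(pathSet T) = #T := by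
  rw [spokeSet, pathSet, card_image_of_injective _ Fin.val_injective,
    card_image_of_injective _ Fin.val_injective, card_toLeft_add_card_toRight]

lemma reach_spoke {i : Fin k} (h : Sum.inl i ∈ T) :
    (conePath k).Reach T (0 : Fin (k + 1)) i.succ :=
  Multigraph.reach_of_mem (G := conePath k) h

lemma reach_path {j : Fin (k - 1)} (h : Sum.inr j ∈ T) :
    (conePath k).Reach T (⟨j + 1, by omega⟩ : Fin (k + 1)) ⟨j + 2, by omega⟩ :=
  Multigraph.reach_of_mem (G := conePath k) h

lemma reach_of_blockIndex_eq {i j : ℕ} (hij : i ≤ j) (hj : j < k)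
    (h : blockIndex (pathSet T) i = blockIndex (pathSet T) j) :
    (conePath k).Reach T (⟨i + 1, by omega⟩ : Fin (k + 1)) ⟨j + 1, by omega⟩ := by
  induction j, hij using Nat.le_induction with
  | base => exact .refl _
  | succ j hij ih =>
    obtain ⟨hjk, hedge⟩ := mem_pathSet.mp (mem_of_blockIndex_eq hij h)
    have hsame : blockIndex (pathSet T) i = blockIndex (pathSet T) j :=
      le_antisymm (blockIndex_mono _ hij) (h ▸ blockIndex_mono _ j.le_succ)
    exact .trans _ _ _ (ih (by omega) hsame) (reach_path hedge)

lemma reach_zero_iff (i : Fin k) : (conePath k).Reach T (0 : Fin (k + 1)) i.succ ↔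
    ∃ j ∈ spokeSet T, blockIndex (pathSet T) j = blockIndex (pathSet T) i := by
  constructor
  · intro h
    -- being the cone point, or lying in a block that has a spoke, is invariant along edges
    have hinv := Multigraph.Reach.iff_of_forall_mem (p := fun v : Fin (k + 1) => v = 0 ∨
      ∃ j ∈ spokeSet T, blockIndex (pathSet T) j = blockIndex (pathSet T) (v - 1)) ?_ h
    · simpa [Fin.succ_ne_zero] using hinv
    rintro (i' | j) he
    · exact iff_of_true (Or.inl rfl) (Or.inr ⟨i', mem_spokeSet.mpr ⟨i'.2, he⟩, by simp [conePath]⟩)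
    · have hj : (j : ℕ) ∈ pathSet T := mem_pathSet.mpr ⟨j.2, he⟩
      simp [conePath, blockIndex_succ, hj, Fin.ext_iff]
  · rintro ⟨j, hj, hβ⟩
    obtain ⟨hjk, hspoke⟩ := mem_spokeSet.mp hj
    refine .trans _ _ _ (reach_spoke hspoke) ?_
    rcases le_total j i with hji | hij
    · exact reach_of_blockIndex_eq hji i.2 hβ
    · exact .symm _ _ (reach_of_blockIndex_eq hij hjk hβ.symm)

lemma forall_reach_iff : (∀ v w, (conePath k).Reach T v w) ↔
    ∀ i < k, ∃ j ∈ spokeSet T, blockIndex (pathSet T) j = blockIndex (pathSet T) i := by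
  refine ⟨fun h i hi => (reach_zero_iff ⟨i, hi⟩).mp (h _ _), fun h => ?_⟩
  refine Multigraph.reach_of_forall_reach (s := (0 : Fin (k + 1))) fun v => ?_
  induction v using Fin.cases with
  | zero => exact .refl _
  | succ i => exact (reach_zero_iff i).mpr (h i i.2)

lemma isSpanningTree_iff : (conePath k).IsSpanningTree T ↔
    (∀ i < k, ∃ j ∈ spokeSet T, blockIndex (pathSet T) j = blockIndex (pathSet T) i) ∧
      #(spokeSet T) + #(pathSet T) = k := by
  rw [← forall_reach_iff, card_spokeSet_add_card_pathSet]
  exact and_congr Iff.rfl ((congrArg _ (Fintype.card_fin (k + 1))).to_iff.trans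
    Nat.add_right_cancel_iff)

theorem isSpanningTree_iff_hasBlockSpokes {n : ℕ} (T : Finset (Fin (n + 1) ⊕ Fin (n + 1 - 1))) :
    (conePath (n + 1)).IsSpanningTree T ↔ HasBlockSpokes n 1 (spokeSet T) (pathSet T) := by
  set S := spokeSet T
  set P := pathSet T
  have hS : S ⊆ range (n + 1) := spokeSet_subset_range
  have hP : P ⊆ range n := by simpa using pathSet_subset_range (T := T)
  have hPn : #P ≤ n := card_range n ▸ card_le_card hP
  have hblocks : #((range (n + 1)).image (blockIndex P)) = n + 1 - #P := by
    rw [image_blockIndex_range, card_range, blockIndex_of_subset_range hP]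
    omega
  have hmaps : ∀ j ∈ S, blockIndex P j ∈ (range (n + 1)).image (blockIndex P) :=
    fun j hj => mem_image_of_mem _ (hS hj)
  calc (conePath (n + 1)).IsSpanningTree T
      ↔ (∀ i < n + 1, ∃ j ∈ S, blockIndex P j = blockIndex P i) ∧ #S + #P = n + 1 :=
        isSpanningTree_iff
    _ ↔ (∀ b ∈ (range (n + 1)).image (blockIndex P), ∃ j ∈ S, blockIndex P j = b) ∧
          #S = #((range (n + 1)).image (blockIndex P)) :=
        and_congr (by simp) (by omega)
    _ ↔ ∀ b ∈ (range (n + 1)).image (blockIndex P), #{j ∈ S | blockIndex P j = b} = 1 :=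
        (forall_card_fiber_eq_one_iff hmaps).symm
    _ ↔ HasBlockSpokes n 1 S P := by
        simp [HasBlockSpokes, spokesInBlock]

lemma injective_spokeSet_pathSet :
    Function.Injective fun T : Finset (Fin k ⊕ Fin (k - 1)) => (spokeSet T, pathSet T) :=
  ((image_injective Fin.val_injective).prodMap (image_injective Fin.val_injective)).comp
    sumEquiv.injective

lemma image_spokeSet_pathSet_univ :
    univ.image (fun T : Finset (Fin k ⊕ Fin (k - 1)) => (spokeSet T, pathSet T)) =
      (range k).powerset ×ˢ (range (k - 1)).powerset := by
  have hφ : (fun T : Finset (Fin k ⊕ Fin (k - 1)) => (spokeSet T, pathSet T)) =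
      Prod.map (image Fin.val) (image Fin.val) ∘ sumEquiv := rfl
  rw [hφ, ← image_image, image_univ_of_surjective sumEquiv.surjective, ← univ_product_univ,
    prodMap_image_product, ← powerset_univ, ← powerset_univ, ← powerset_image,
    ← powerset_image, image_fin_univ, image_fin_univ]

theorem card_isSpanningTree (n : ℕ) :
    Nat.card {T : Finset (conePath (n + 1)).E // (conePath (n + 1)).IsSpanningTree T} =
      blockSpokeCount n 1 :=
  calc _ = Nat.card {T : Finset (Fin (n + 1) ⊕ Fin (n + 1 - 1)) //
          HasBlockSpokes n 1 (spokeSet T) (pathSet T)} :=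
        Nat.card_congr (Equiv.subtypeEquivRight isSpanningTree_iff_hasBlockSpokes)
    _ = blockSpokeCount n 1 := by
      rw [Nat.card_eq_fintype_card, Fintype.card_subtype, blockSpokeCount,
        ← card_image_of_injective _ injective_spokeSet_pathSet,
        show range n = range (n + 1 - 1) from rfl, ← image_spokeSet_pathSet_univ, filter_image]

end conePath

/-- The number of spanning trees of the cone over the path on `k` vertices is the
`2k`-th Fibonacci number. -/
theorem conePath_spanningTree_count (k : ℕ) (hk : 1 ≤ k) :
    Nat.card {T : Finset (conePath k).E // (conePath k).IsSpanningTree T} =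
      Nat.fib (2 * k) := by
  obtain ⟨n, rfl⟩ := Nat.exists_eq_add_of_le' hk
  rw [conePath.card_isSpanningTree, (blockSpokeCount_eq_fib n).1, mul_add, mul_one]
end
end

section
/- Let A_m denote the Lucas numbers. For all integers j, c and every integer ℓ ≥ 1, A_{2(j + c·2^ℓ)} ≡ (−1)^c · A_{2j} (mod A_{2^ℓ}). -/
/-- The Lucas numbers `2, 1, 3, 4, 7, …`. -/
def lucasNat : ℕ → ℤ
  | 0 => 2
  | 1 => 1
  | n + 2 => lucasNat (n + 1) + lucasNat n

/-- Fibonacci numbers extended to negative indices by `F₋ₐ = (-1)^(a+1) Fₐ`. -/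
def fibZ (n : ℤ) : ℤ :=
  if 0 ≤ n then (Nat.fib n.toNat : ℤ)
  else (-1) ^ ((-n).toNat + 1) * (Nat.fib (-n).toNat : ℤ)

/-- Lucas numbers extended to negative indices by `A₋ₐ = (-1)^a Aₐ`. -/
def lucasZ (n : ℤ) : ℤ :=
  if 0 ≤ n then lucasNat n.toNat
  else (-1) ^ (-n).toNat * lucasNat (-n).toNat

/-!
By Binet's formula `A_n = φⁿ + ψⁿ` with `φψ = -1`, the addition identity gives
`A_{x+2N} = A_{x+N} A_N - (-1)^N A_x`. For even `N` this says that `x ↦ A_x mod A_N` is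
antiperiodic with antiperiod `2N`, so shifting the index by `c · 2N` multiplies `A_x` by `(-1)^c`
modulo `A_N`. Take `N = 2^ℓ` and `x = 2j`.
-/

open Real goldenRatio

theorem cast_lucasNat (n : ℕ) : (lucasNat n : ℝ) = φ ^ n + ψ ^ n := by
  induction n using Nat.twoStepInduction with
  | zero => norm_num [lucasNat]
  | one => simp [lucasNat, goldenRatio_add_goldenConj]
  | more n ih₀ ih₁ =>
    rw [lucasNat, Int.cast_add, ih₀, ih₁]
    linear_combination (-φ ^ n) * goldenRatio_sq - ψ ^ n * goldenConj_sq

theorem lucasZ_natCast (n : ℕ) : lucasZ n = lucasNat n := by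
  simp [lucasZ]

theorem lucasZ_neg_natCast (n : ℕ) : lucasZ (-n) = (-1) ^ n * lucasNat n := by
  rcases Nat.eq_zero_or_pos n with rfl | hn
  · simp [lucasZ]
  · simp [lucasZ, hn.ne']

theorem cast_lucasZ (n : ℤ) : (lucasZ n : ℝ) = φ ^ n + ψ ^ n := by
  obtain ⟨n, rfl | rfl⟩ := Int.eq_nat_or_neg n
  · simp [lucasZ_natCast, cast_lucasNat]
  · rw [lucasZ_neg_natCast, zpow_neg, zpow_neg, zpow_natCast, zpow_natCast, ← inv_pow, ← inv_pow,
      inv_goldenRatio, inv_goldenConj, Int.cast_mul, Int.cast_pow, Int.cast_neg, Int.cast_one,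
      cast_lucasNat, neg_pow φ, neg_pow ψ]
    ring

theorem lucasZ_add (a : ℤ) (b : ℕ) :
    lucasZ (a + b) = lucasZ a * lucasZ b - (-1) ^ b * lucasZ (a - b) := by
  obtain ⟨u, rfl⟩ : ∃ u, a = u + b := ⟨a - b, by ring⟩
  have hφψ : φ ^ b * ψ ^ b = (-1) ^ b := by rw [← mul_pow, goldenRatio_mul_goldenConj]
  rw [← Int.cast_inj (α := ℝ)]
  simp only [Int.cast_sub, Int.cast_mul, Int.cast_pow, Int.cast_neg, Int.cast_one, cast_lucasZ,
    add_sub_cancel_right, add_assoc, zpow_add₀ goldenRatio_ne_zero, zpow_add₀ goldenConj_ne_zero,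
    zpow_natCast]
  linear_combination (-(φ ^ u + ψ ^ u)) * hφψ

theorem lucasZ_antiperiodic {N : ℕ} (hN : Even N) :
    Function.Antiperiodic (fun x : ℤ ↦ (lucasZ x : ZMod (lucasZ N).natAbs)) (2 * N) := by
  intro x
  have h := lucasZ_add (x + N) N
  rw [add_sub_cancel_right, hN.neg_one_pow, one_mul, add_assoc, ← two_mul] at h
  have hA : (lucasZ N : ZMod (lucasZ N).natAbs) = 0 :=
    (ZMod.intCast_zmod_eq_zero_iff_dvd _ _).mpr (Int.natAbs_dvd.mpr dvd_rfl)
  simp only [h, Int.cast_sub, Int.cast_mul, hA, mul_zero, zero_sub]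

/-- For all integers `j, c` and every `ℓ ≥ 1`,
`A_{2(j + c·2^ℓ)} ≡ (-1)^c · A_{2j} (mod A_{2^ℓ})`. -/
theorem lucas_two_mul_mod_lucas_pow (j c : ℤ) (ℓ : ℕ) (hℓ : 1 ≤ ℓ) :
    lucasZ (2 * (j + c * 2 ^ ℓ)) ≡ (-1) ^ c.natAbs * lucasZ (2 * j)
      [ZMOD lucasZ (2 ^ ℓ)] := by
  have hN : Even (2 ^ ℓ) := (Nat.even_pow' (by omega)).mpr even_two
  have h := (lucasZ_antiperiodic hN).add_int_mul_eq (x := 2 * j) c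
  rw [Int.coe_negOnePow] at h
  rw [show 2 * (j + c * 2 ^ ℓ) = 2 * j + c * (2 * 2 ^ ℓ) by ring, ← Int.modEq_natAbs,
    ← ZMod.intCast_eq_intCast_iff]
  exact_mod_cast h
end
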